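/- Let A be a commutative monoid with zero and let F_1[A] denote A viewed as a multiplicative monoid. Then the prime ideals of the free monoid F_1[T_1,...,T_n] (monomials in T_1,...,T_n together with 0) are exactly the ideals generated by subsets of {T_1,...,T_n}; in particular there are exactly 2^n prime ideals. -/

import Mathlib

/-- The free commutative monoid with zero on `n` generators `T_1, ..., T_n`:
monomials `T_1^{e_1} ⋯ T_n^{e_n}` together with an absorbing element `0`. -/
abbrev FreeMonoidWithZero (n : ℕ) : Type := WithZero (Multiplicative (Fin n →₀ ℕ))

/-- The generator `T i` of the free monoid with zero. -/
noncomputable def Tgen {n : ℕ} (i : Fin n) : FreeMonoidWithZero n :=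
  (Multiplicative.ofAdd (Finsupp.single i 1) : Multiplicative (Fin n →₀ ℕ))

/-- An ideal of a commutative monoid with zero. -/
def IsMonoidIdeal {A : Type*} [CommMonoidWithZero A] (I : Set A) : Prop :=
  0 ∈ I ∧ ∀ a ∈ I, ∀ b : A, a * b ∈ I

/-- A prime ideal of a commutative monoid with zero: an ideal whose complement
contains `1` and is closed under multiplication. -/
def IsMonoidPrimeIdeal {A : Type*} [CommMonoidWithZero A] (I : Set A) : Prop :=
  IsMonoidIdeal I ∧ 1 ∉ I ∧ ∀ a b : A, a ∉ I → b ∉ I → a * b ∉ I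

/-- The ideal of the free monoid with zero generated by the generators `T i`, `i ∈ S`. -/
def genIdeal {n : ℕ} (S : Set (Fin n)) : Set (FreeMonoidWithZero n) :=
  {a | a = 0 ∨ ∃ i ∈ S, ∃ b, a = Tgen i * b}

open Multiplicative Finsupp

lemma mem_genIdeal {n : ℕ} {S : Set (Fin n)} {f : Fin n →₀ ℕ} :
    (↑(ofAdd f) : FreeMonoidWithZero n) ∈ genIdeal S ↔ ∃ i ∈ S, f i ≠ 0 := by
  constructor
  · rintro (h | ⟨i, hi, b, hb⟩)
    · exact absurd h (WithZero.coe_ne_zero)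
    · refine ⟨i, hi, ?_⟩
      rcases eq_or_ne b 0 with rfl | hb0
      · rw [mul_zero] at hb; exact absurd hb (WithZero.coe_ne_zero)
      · obtain ⟨g, rfl⟩ := WithZero.ne_zero_iff_exists.mp hb0
        rw [show Tgen i = ((ofAdd (Finsupp.single i 1) : Multiplicative (Fin n →₀ ℕ)) : FreeMonoidWithZero n) from rfl,
          ← WithZero.coe_mul] at hb
        have : f = (Finsupp.single i 1) + g.toAdd := by
          have := WithZero.coe_inj.mp hb
          exact congrArg Multiplicative.toAdd this
        simp [this, Finsupp.add_apply]
  · rintro ⟨i, hi, hfi⟩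
    refine Or.inr ⟨i, hi,
      ((ofAdd (f - Finsupp.single i 1) : Multiplicative (Fin n →₀ ℕ)) : FreeMonoidWithZero n), ?_⟩
    rw [show Tgen i = ((ofAdd (Finsupp.single i 1) : Multiplicative (Fin n →₀ ℕ)) : FreeMonoidWithZero n) from rfl,
      ← WithZero.coe_mul, WithZero.coe_inj, ← ofAdd_add]
    congr 1
    rw [add_tsub_cancel_of_le]
    rwa [Finsupp.single_le_iff, Nat.one_le_iff_ne_zero]

lemma coe_ofAdd_eq_prod {n : ℕ} (f : Fin n →₀ ℕ) :
    (↑(ofAdd f) : FreeMonoidWithZero n) = ∏ i ∈ f.support, Tgen i ^ (f i) := by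
  calc (↑(ofAdd f) : FreeMonoidWithZero n)
      = ∏ i ∈ f.support, (↑(ofAdd (Finsupp.single i (f i))) : FreeMonoidWithZero n) := by
        have hmap := map_prod (WithZero.coeMonoidHom : Multiplicative (Fin n →₀ ℕ) →* WithZero (Multiplicative (Fin n →₀ ℕ)))
          (fun i => (ofAdd (Finsupp.single i (f i)) : Multiplicative (Fin n →₀ ℕ))) f.support
        simp only [show ∀ x : Multiplicative (Fin n →₀ ℕ), WithZero.coeMonoidHom x = (↑x : WithZero _) from fun _ => rfl] at hmap
        rw [← hmap, WithZero.coe_inj]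
        rw [show (∏ i ∈ f.support, ofAdd (Finsupp.single i (f i))) = ofAdd (∑ i ∈ f.support, Finsupp.single i (f i)) by
          simp [ofAdd_sum]]
        congr 1
        exact (Finsupp.sum_single f).symm
    _ = ∏ i ∈ f.support, Tgen i ^ (f i) := by
        refine Finset.prod_congr rfl fun i _ => ?_
        rw [show Tgen i = ((ofAdd (Finsupp.single i 1) : Multiplicative (Fin n →₀ ℕ)) : FreeMonoidWithZero n) from rfl,
          ← WithZero.coe_pow, WithZero.coe_inj, ← ofAdd_nsmul]
        congr 1
        simp [Finsupp.smul_single]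

lemma genIdeal_isPrime {n : ℕ} (S : Set (Fin n)) : IsMonoidPrimeIdeal (genIdeal S) := by
  refine ⟨⟨Or.inl rfl, ?_⟩, ?_, ?_⟩
  · rintro a (rfl | ⟨i, hi, c, rfl⟩) b
    · exact Or.inl (zero_mul b)
    · exact Or.inr ⟨i, hi, c * b, (mul_assoc _ _ _)⟩
  · have : (1 : FreeMonoidWithZero n) = (↑(ofAdd (0 : Fin n →₀ ℕ)) : FreeMonoidWithZero n) := rfl
    rw [this, mem_genIdeal]
    simp
  · intro a b ha hb hab
    have ha0 : a ≠ 0 := fun h => ha (h ▸ Or.inl rfl)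
    have hb0 : b ≠ 0 := fun h => hb (h ▸ Or.inl rfl)
    obtain ⟨x, rfl⟩ := WithZero.ne_zero_iff_exists.mp ha0
    obtain ⟨y, rfl⟩ := WithZero.ne_zero_iff_exists.mp hb0
    rw [show ((x : FreeMonoidWithZero n) * y) = (↑(ofAdd (x.toAdd + y.toAdd)) : FreeMonoidWithZero n) by
      rw [← WithZero.coe_mul]; rfl] at hab
    rw [mem_genIdeal] at hab
    obtain ⟨i, hi, hne⟩ := hab
    rw [Finsupp.add_apply] at hne
    by_cases h : x.toAdd i = 0
    · exact hb ((mem_genIdeal (f := y.toAdd)).mpr ⟨i, hi, by omega⟩)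
    · exact ha ((mem_genIdeal (f := x.toAdd)).mpr ⟨i, hi, h⟩)

lemma Tgen_mem_genIdeal {n : ℕ} {S : Set (Fin n)} {i : Fin n} :
    Tgen i ∈ genIdeal S ↔ i ∈ S := by
  rw [show Tgen i = ((ofAdd (Finsupp.single i 1) : Multiplicative (Fin n →₀ ℕ)) : FreeMonoidWithZero n) from rfl,
    mem_genIdeal]
  constructor
  · rintro ⟨j, hj, hne⟩
    rcases eq_or_ne j i with rfl | h
    · exact hj
    · simp [Finsupp.single_apply_eq_zero, h.symm] at hne
  · intro hi
    exact ⟨i, hi, by simp⟩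

lemma prime_eq_genIdeal {n : ℕ} {p : Set (FreeMonoidWithZero n)}
    (hp : IsMonoidPrimeIdeal p) : p = genIdeal {i | Tgen i ∈ p} := by
  obtain ⟨⟨h0, hmul⟩, h1, hcomp⟩ := hp
  ext a
  constructor
  · intro ha
    rcases eq_or_ne a 0 with rfl | ha0
    · exact Or.inl rfl
    obtain ⟨x, rfl⟩ := WithZero.ne_zero_iff_exists.mp ha0
    suffices hsuf : ∃ i ∈ {i | Tgen i ∈ p}, x.toAdd i ≠ 0 by
      exact (mem_genIdeal (f := x.toAdd)).mpr hsuf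
    by_contra hcon
    push_neg at hcon
    -- every generator dividing x is not in p
    have hnot : ∀ i ∈ (x.toAdd).support, ∀ k : ℕ, Tgen i ^ k ∉ p := by
      intro i hi k
      have hTi : Tgen i ∉ p := by
        intro hTi
        exact (Finsupp.mem_support_iff.mp hi) (hcon i hTi)
      induction k with
      | zero => simpa using h1
      | succ m ih => rw [pow_succ]; exact hcomp _ _ ih hTi
    have : (↑x : FreeMonoidWithZero n) ∉ p := by
      have hx : (↑x : FreeMonoidWithZero n) = (↑(ofAdd x.toAdd) : FreeMonoidWithZero n) := rfl
      rw [hx, coe_ofAdd_eq_prod]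
      exact Finset.prod_induction _ (· ∉ p) (fun a b => hcomp a b) h1
        (fun i hi => hnot i hi _)
    exact this ha
  · rintro (rfl | ⟨i, hi, b, rfl⟩)
    · exact h0
    · exact hmul _ hi b

lemma genIdeal_injective {n : ℕ} : Function.Injective (genIdeal (n := n)) := by
  intro S T h
  ext i
  rw [← Tgen_mem_genIdeal (S := S), h, Tgen_mem_genIdeal]

/-- The prime ideals of the free monoid `F_1[T_1,...,T_n]` are exactly the ideals
generated by subsets of `{T_1,...,T_n}`; in particular there are exactly `2^n`
prime ideals. -/
theorem prime_ideals_of_free_monoid (n : ℕ) :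
    (∀ p : Set (FreeMonoidWithZero n),
      IsMonoidPrimeIdeal p ↔ ∃ S : Set (Fin n), p = genIdeal S) ∧
    Nat.card {p : Set (FreeMonoidWithZero n) // IsMonoidPrimeIdeal p} = 2 ^ n := by
  have hchar : ∀ p : Set (FreeMonoidWithZero n),
      IsMonoidPrimeIdeal p ↔ ∃ S : Set (Fin n), p = genIdeal S := by
    intro p
    constructor
    · intro hp
      exact ⟨_, prime_eq_genIdeal hp⟩
    · rintro ⟨S, rfl⟩
      exact genIdeal_isPrime S
  refine ⟨hchar, ?_⟩
  have hbij : Function.Bijective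
      (fun S : Set (Fin n) =>
        (⟨genIdeal S, genIdeal_isPrime S⟩ : {p : Set (FreeMonoidWithZero n) // IsMonoidPrimeIdeal p})) := by
    constructor
    · intro S T h
      exact genIdeal_injective (congrArg Subtype.val h)
    · rintro ⟨p, hp⟩
      obtain ⟨S, rfl⟩ := (hchar p).mp hp
      exact ⟨S, rfl⟩
  rw [← Nat.card_eq_of_bijective _ hbij]
  simp [Nat.card_eq_fintype_card]
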